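/- arXiv:2604.16068 — 2 statements merged into one kernel-verified Lean document; each statement's English description precedes it below -/
import Mathlib

section
/- The function C(F_c) = ln det(E(F_c)) − ln det(Q(F_c)) is well defined (both determinants are positive reals since Q(F_c) and E(F_c) are Hermitian positive definite) and is differentiable with respect to F_c in the real (Fréchet) sense, and its derivative at F_c in an arbitrary direction D ∈ ℂ^{m_A×m_c} equals 2 Re tr(G^H D), where G = Ẑ^H E(F_c)^{-1} Ẑ F_c − tr(Q(F_c)^{-1} − E(F_c)^{-1}) · (ς₁² I_{m_A} + ς₂² H^H H) F_c. Equivalently, the Wirtinger gradient of C with respect to F_c is G, which establishes the rate-gradient expression used in the transmit-precoder update. -/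
open Matrix
open scoped ComplexOrder

attribute [local instance] Matrix.frobeniusNormedAddCommGroup Matrix.frobeniusNormedSpace

section RateGradient

variable {mA mB mR mc : ℕ}

/-- The interference-plus-noise covariance
`Q(F_c) = Ẑ F_s F_sᴴ Ẑᴴ + (σ² + ς₁² tr(F_c F_cᴴ + F_s F_sᴴ)
          + ς₂² tr(H (F_c F_cᴴ + F_s F_sᴴ) Hᴴ)) I`. -/
noncomputable def Qmat (Zh : Matrix (Fin mB) (Fin mA) ℂ) (Fs : Matrix (Fin mA) (Fin mA) ℂ)
    (H : Matrix (Fin mR) (Fin mA) ℂ) (σ ς₁ ς₂ : ℝ)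
    (Fc : Matrix (Fin mA) (Fin mc) ℂ) : Matrix (Fin mB) (Fin mB) ℂ :=
  Zh * Fs * Fsᴴ * Zhᴴ
    + (((σ : ℂ))^2 + ((ς₁ : ℂ))^2 * Matrix.trace (Fc * Fcᴴ + Fs * Fsᴴ)
        + ((ς₂ : ℂ))^2 * Matrix.trace (H * (Fc * Fcᴴ + Fs * Fsᴴ) * Hᴴ))
      • (1 : Matrix (Fin mB) (Fin mB) ℂ)

/-- `E(F_c) = Q(F_c) + Ẑ F_c F_cᴴ Ẑᴴ`. -/
noncomputable def Emat (Zh : Matrix (Fin mB) (Fin mA) ℂ) (Fs : Matrix (Fin mA) (Fin mA) ℂ)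
    (H : Matrix (Fin mR) (Fin mA) ℂ) (σ ς₁ ς₂ : ℝ)
    (Fc : Matrix (Fin mA) (Fin mc) ℂ) : Matrix (Fin mB) (Fin mB) ℂ :=
  Qmat Zh Fs H σ ς₁ ς₂ Fc + Zh * Fc * Fcᴴ * Zhᴴ

/-- The achievable rate `C(F_c) = ln det E(F_c) − ln det Q(F_c)` (both
determinants are positive reals). -/
noncomputable def rateFun (Zh : Matrix (Fin mB) (Fin mA) ℂ) (Fs : Matrix (Fin mA) (Fin mA) ℂ)
    (H : Matrix (Fin mR) (Fin mA) ℂ) (σ ς₁ ς₂ : ℝ)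
    (Fc : Matrix (Fin mA) (Fin mc) ℂ) : ℝ :=
  Real.log ((Emat Zh Fs H σ ς₁ ς₂ Fc).det).re - Real.log ((Qmat Zh Fs H σ ς₁ ς₂ Fc).det).re

/-- The Wirtinger gradient
`G = Ẑᴴ E(F_c)⁻¹ Ẑ F_c − tr(Q(F_c)⁻¹ − E(F_c)⁻¹) · (ς₁² I + ς₂² Hᴴ H) F_c`. -/
noncomputable def rateGrad (Zh : Matrix (Fin mB) (Fin mA) ℂ) (Fs : Matrix (Fin mA) (Fin mA) ℂ)
    (H : Matrix (Fin mR) (Fin mA) ℂ) (σ ς₁ ς₂ : ℝ)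
    (Fc : Matrix (Fin mA) (Fin mc) ℂ) : Matrix (Fin mA) (Fin mc) ℂ :=
  Zhᴴ * (Emat Zh Fs H σ ς₁ ς₂ Fc)⁻¹ * Zh * Fc
    - Matrix.trace ((Qmat Zh Fs H σ ς₁ ς₂ Fc)⁻¹ - (Emat Zh Fs H σ ς₁ ς₂ Fc)⁻¹)
        • ((((ς₁ : ℂ))^2 • (1 : Matrix (Fin mA) (Fin mA) ℂ) + ((ς₂ : ℂ))^2 • (Hᴴ * H)) * Fc)


/-! ### Auxiliary infrastructure for the proof of `stmt9`. -/

noncomputable section Stmt9Aux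

instance stmt9_finDim {a b : ℕ} : FiniteDimensional ℝ (Matrix (Fin a) (Fin b) ℂ) :=
  Module.Finite.matrix

lemma stmt9_isBBM_mul {l m n : ℕ} :
    IsBoundedBilinearMap ℝ
      (fun p : Matrix (Fin l) (Fin m) ℂ × Matrix (Fin m) (Fin n) ℂ => p.1 * p.2) where
  add_left := fun A A' B => Matrix.add_mul A A' B
  smul_left := fun r A B => Matrix.smul_mul r A B
  add_right := fun A B B' => Matrix.mul_add A B B'
  smul_right := fun r A B => Matrix.mul_smul A r B
  bound := ⟨1, one_pos, fun A B => by simpa using Matrix.frobenius_norm_mul A B⟩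

/-- conjugate-transpose as a continuous `ℝ`-linear map. -/
def stmt9_ctCLM (a b : ℕ) : Matrix (Fin a) (Fin b) ℂ →L[ℝ] Matrix (Fin b) (Fin a) ℂ :=
  LinearMap.toContinuousLinearMap
    { toFun := fun M => Mᴴ
      map_add' := fun A B => Matrix.conjTranspose_add A B
      map_smul' := fun r M => by
        ext i j
        simp [Matrix.conjTranspose_apply, Complex.real_smul, _root_.map_mul] }

/-- derivative of `X ↦ X * Xᴴ`. -/
def stmt9_sqDeriv {mA mc : ℕ} (Fc : Matrix (Fin mA) (Fin mc) ℂ) :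
    Matrix (Fin mA) (Fin mc) ℂ →L[ℝ] Matrix (Fin mA) (Fin mA) ℂ :=
  (stmt9_isBBM_mul.deriv (Fc, Fcᴴ)).comp
    ((ContinuousLinearMap.id ℝ _).prod (stmt9_ctCLM mA mc))

lemma stmt9_sqDeriv_apply {mA mc : ℕ} (Fc D : Matrix (Fin mA) (Fin mc) ℂ) :
    stmt9_sqDeriv Fc D = Fc * Dᴴ + D * Fcᴴ := by
  exact stmt9_isBBM_mul.deriv_apply _ _

lemma stmt9_hasFDerivAt_sq {mA mc : ℕ} (Fc : Matrix (Fin mA) (Fin mc) ℂ) :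
    HasFDerivAt (fun X : Matrix (Fin mA) (Fin mc) ℂ => X * Xᴴ) (stmt9_sqDeriv Fc) Fc := by
  have h := (stmt9_isBBM_mul (l := mA) (m := mc) (n := mA)).hasFDerivAt (Fc, Fcᴴ)
  exact h.comp Fc ((hasFDerivAt_id Fc).prodMk (stmt9_ctCLM mA mc).hasFDerivAt)

/-- det as a continuous multilinear map of the rows. -/
def stmt9_detCM (k : ℕ) : ContinuousMultilinearMap ℂ (fun _ : Fin k => (Fin k → ℂ)) ℂ :=
  { toMultilinearMap := (Matrix.detRowAlternating (n := Fin k) (R := ℂ)).toMultilinearMap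
    cont := by
      have : Continuous fun m : Fin k → Fin k → ℂ => (Matrix.of m).det :=
        Continuous.matrix_det continuous_id
      exact this }

def stmt9_rowsCLM (k : ℕ) : Matrix (Fin k) (Fin k) ℂ →L[ℝ] (Fin k → Fin k → ℂ) :=
  LinearMap.toContinuousLinearMap
    { toFun := fun M => M
      map_add' := fun _ _ => rfl
      map_smul' := fun _ _ => rfl }

def stmt9_detDeriv {k : ℕ} (A : Matrix (Fin k) (Fin k) ℂ) :
    Matrix (Fin k) (Fin k) ℂ →L[ℝ] ℂ :=
  (((stmt9_detCM k).linearDeriv (stmt9_rowsCLM k A)).restrictScalars ℝ).comp (stmt9_rowsCLM k)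

lemma stmt9_detCM_update {k : ℕ} (A X : Matrix (Fin k) (Fin k) ℂ) (i : Fin k) :
    stmt9_detCM k (Function.update (stmt9_rowsCLM k A) i (stmt9_rowsCLM k X i))
      = (Matrix.updateRow A i (X i)).det :=
  rfl

lemma stmt9_sum_det_updateRow {k : ℕ} (A X : Matrix (Fin k) (Fin k) ℂ) :
    ∑ i, (Matrix.updateRow A i (X i)).det = Matrix.trace (Matrix.adjugate A * X) := by
  have hrow : ∀ i, (Matrix.updateRow A i (X i)).det = ∑ j, X i j * Matrix.adjugate A j i := by
    intro i
    rw [← Matrix.cramer_transpose_apply]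
    have hx : (∑ j, X i j • (Pi.single j (1:ℂ) : Fin k → ℂ)) = X i := by
      ext l; simp [Pi.single_apply, Finset.sum_apply]
    rw [← hx, map_sum]
    simp [Matrix.adjugate_def, Finset.sum_apply, Pi.single_apply]
  simp only [hrow, Matrix.trace, Matrix.diag_apply, Matrix.mul_apply]
  rw [Finset.sum_comm]
  simp [mul_comm]

lemma stmt9_detDeriv_apply {k : ℕ} (A X : Matrix (Fin k) (Fin k) ℂ) :
    stmt9_detDeriv A X = Matrix.trace (Matrix.adjugate A * X) := by
  simp only [stmt9_detDeriv, ContinuousLinearMap.comp_apply,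
    ContinuousLinearMap.coe_restrictScalars', ContinuousMultilinearMap.linearDeriv_apply]
  rw [← stmt9_sum_det_updateRow A X]
  exact Finset.sum_congr rfl fun i _ => stmt9_detCM_update A X i

lemma stmt9_hasFDerivAt_det {k : ℕ} (A : Matrix (Fin k) (Fin k) ℂ) :
    HasFDerivAt (fun M : Matrix (Fin k) (Fin k) ℂ => M.det) (stmt9_detDeriv A) A := by
  have h1 := ((stmt9_detCM k).hasFDerivAt (stmt9_rowsCLM k A)).restrictScalars ℝ
  have h2 := (stmt9_rowsCLM k).hasFDerivAt (x := A)
  exact h1.comp A h2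

variable {mA mB mR mc : ℕ}

/-- the linear part of `Q` as a function of `S = Fc * Fcᴴ`. -/
def stmt9_lQ (H : Matrix (Fin mR) (Fin mA) ℂ) (ς₁ ς₂ : ℝ) (mB : ℕ) :
    Matrix (Fin mA) (Fin mA) ℂ →L[ℝ] Matrix (Fin mB) (Fin mB) ℂ :=
  LinearMap.toContinuousLinearMap
    { toFun := fun S => (((ς₁ : ℂ))^2 * Matrix.trace S
          + ((ς₂ : ℂ))^2 * Matrix.trace (H * S * Hᴴ)) • (1 : Matrix (Fin mB) (Fin mB) ℂ)
      map_add' := fun S T => by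
        simp [Matrix.mul_add, Matrix.add_mul, Matrix.trace_add, add_smul]; module
      map_smul' := fun r S => by
        simp only [Matrix.mul_smul, Matrix.smul_mul, Matrix.trace_smul, RingHom.id_apply,
          Complex.real_smul]
        rw [← smul_assoc]
        congr 1
        simp only [Complex.real_smul]
        ring }

def stmt9_lZ (Zh : Matrix (Fin mB) (Fin mA) ℂ) :
    Matrix (Fin mA) (Fin mA) ℂ →L[ℝ] Matrix (Fin mB) (Fin mB) ℂ :=
  LinearMap.toContinuousLinearMap
    { toFun := fun S => Zh * S * Zhᴴ
      map_add' := fun S T => by simp [Matrix.mul_add, Matrix.add_mul]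
      map_smul' := fun r S => by simp [Matrix.mul_smul, Matrix.smul_mul] }

lemma stmt9_lQ_apply (H : Matrix (Fin mR) (Fin mA) ℂ) (ς₁ ς₂ : ℝ) (mB : ℕ)
    (S : Matrix (Fin mA) (Fin mA) ℂ) :
    stmt9_lQ H ς₁ ς₂ mB S = (((ς₁ : ℂ))^2 * Matrix.trace S
        + ((ς₂ : ℂ))^2 * Matrix.trace (H * S * Hᴴ)) • (1 : Matrix (Fin mB) (Fin mB) ℂ) := rfl

lemma stmt9_lZ_apply (Zh : Matrix (Fin mB) (Fin mA) ℂ) (S : Matrix (Fin mA) (Fin mA) ℂ) :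
    stmt9_lZ Zh S = Zh * S * Zhᴴ := rfl

/-- the constant part of `Q`. -/
def stmt9_K (Zh : Matrix (Fin mB) (Fin mA) ℂ) (Fs : Matrix (Fin mA) (Fin mA) ℂ)
    (H : Matrix (Fin mR) (Fin mA) ℂ) (σ ς₁ ς₂ : ℝ) : Matrix (Fin mB) (Fin mB) ℂ :=
  Zh * Fs * Fsᴴ * Zhᴴ + (((σ : ℂ))^2 + ((ς₁ : ℂ))^2 * Matrix.trace (Fs * Fsᴴ)
      + ((ς₂ : ℂ))^2 * Matrix.trace (H * (Fs * Fsᴴ) * Hᴴ)) • (1 : Matrix (Fin mB) (Fin mB) ℂ)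

lemma stmt9_Qmat_eq (Zh : Matrix (Fin mB) (Fin mA) ℂ) (Fs : Matrix (Fin mA) (Fin mA) ℂ)
    (H : Matrix (Fin mR) (Fin mA) ℂ) (σ ς₁ ς₂ : ℝ) (Fc : Matrix (Fin mA) (Fin mc) ℂ) :
    Qmat Zh Fs H σ ς₁ ς₂ Fc = stmt9_K Zh Fs H σ ς₁ ς₂ + stmt9_lQ H ς₁ ς₂ mB (Fc * Fcᴴ) := by
  have hsc : ((σ : ℂ))^2 + ((ς₁ : ℂ))^2 * Matrix.trace (Fc * Fcᴴ + Fs * Fsᴴ)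
      + ((ς₂ : ℂ))^2 * Matrix.trace (H * (Fc * Fcᴴ + Fs * Fsᴴ) * Hᴴ)
      = (((σ : ℂ))^2 + ((ς₁ : ℂ))^2 * Matrix.trace (Fs * Fsᴴ)
          + ((ς₂ : ℂ))^2 * Matrix.trace (H * (Fs * Fsᴴ) * Hᴴ))
        + (((ς₁ : ℂ))^2 * Matrix.trace (Fc * Fcᴴ)
          + ((ς₂ : ℂ))^2 * Matrix.trace (H * (Fc * Fcᴴ) * Hᴴ)) := by
    simp only [Matrix.trace_add, Matrix.mul_add, Matrix.add_mul]
    ring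
  rw [Qmat, stmt9_K, stmt9_lQ_apply, hsc, add_smul]
  exact (add_assoc _ _ _).symm

lemma stmt9_Emat_eq (Zh : Matrix (Fin mB) (Fin mA) ℂ) (Fs : Matrix (Fin mA) (Fin mA) ℂ)
    (H : Matrix (Fin mR) (Fin mA) ℂ) (σ ς₁ ς₂ : ℝ) (Fc : Matrix (Fin mA) (Fin mc) ℂ) :
    Emat Zh Fs H σ ς₁ ς₂ Fc
      = stmt9_K Zh Fs H σ ς₁ ς₂ + (stmt9_lQ H ς₁ ς₂ mB + stmt9_lZ Zh) (Fc * Fcᴴ) := by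
  rw [Emat, stmt9_Qmat_eq, ContinuousLinearMap.add_apply, stmt9_lZ_apply]
  simp only [Matrix.mul_assoc]
  abel

lemma stmt9_hasFDerivAt_Qmat (Zh : Matrix (Fin mB) (Fin mA) ℂ) (Fs : Matrix (Fin mA) (Fin mA) ℂ)
    (H : Matrix (Fin mR) (Fin mA) ℂ) (σ ς₁ ς₂ : ℝ) (Fc : Matrix (Fin mA) (Fin mc) ℂ) :
    HasFDerivAt (Qmat Zh Fs H σ ς₁ ς₂)
      ((stmt9_lQ H ς₁ ς₂ mB).comp (stmt9_sqDeriv Fc)) Fc := by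
  have h := ((stmt9_lQ H ς₁ ς₂ mB).hasFDerivAt.comp Fc (stmt9_hasFDerivAt_sq Fc)).const_add
    (stmt9_K Zh Fs H σ ς₁ ς₂)
  have heq : (fun X : Matrix (Fin mA) (Fin mc) ℂ =>
      stmt9_K Zh Fs H σ ς₁ ς₂ + stmt9_lQ H ς₁ ς₂ mB (X * Xᴴ)) = Qmat Zh Fs H σ ς₁ ς₂ :=
    funext fun X => (stmt9_Qmat_eq Zh Fs H σ ς₁ ς₂ X).symm
  exact h.congr_of_eventuallyEq
    (Filter.Eventually.of_forall fun X => stmt9_Qmat_eq Zh Fs H σ ς₁ ς₂ X)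

lemma stmt9_hasFDerivAt_Emat (Zh : Matrix (Fin mB) (Fin mA) ℂ) (Fs : Matrix (Fin mA) (Fin mA) ℂ)
    (H : Matrix (Fin mR) (Fin mA) ℂ) (σ ς₁ ς₂ : ℝ) (Fc : Matrix (Fin mA) (Fin mc) ℂ) :
    HasFDerivAt (Emat Zh Fs H σ ς₁ ς₂)
      ((stmt9_lQ H ς₁ ς₂ mB + stmt9_lZ Zh).comp (stmt9_sqDeriv Fc)) Fc := by
  have h := ((stmt9_lQ H ς₁ ς₂ mB + stmt9_lZ Zh).hasFDerivAt.comp Fc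
    (stmt9_hasFDerivAt_sq Fc)).const_add (stmt9_K Zh Fs H σ ς₁ ς₂)
  have heq : (fun X : Matrix (Fin mA) (Fin mc) ℂ =>
      stmt9_K Zh Fs H σ ς₁ ς₂ + (stmt9_lQ H ς₁ ς₂ mB + stmt9_lZ Zh) (X * Xᴴ))
      = Emat Zh Fs H σ ς₁ ς₂ :=
    funext fun X => (stmt9_Emat_eq Zh Fs H σ ς₁ ς₂ X).symm
  exact h.congr_of_eventuallyEq
    (Filter.Eventually.of_forall fun X => stmt9_Emat_eq Zh Fs H σ ς₁ ς₂ X)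

/-- chain rule for `log ∘ re ∘ det`. -/
lemma stmt9_hasFDerivAt_logdet {f : Matrix (Fin mA) (Fin mc) ℂ → Matrix (Fin mB) (Fin mB) ℂ}
    {L : Matrix (Fin mA) (Fin mc) ℂ →L[ℝ] Matrix (Fin mB) (Fin mB) ℂ}
    {Fc : Matrix (Fin mA) (Fin mc) ℂ}
    (hf : HasFDerivAt f L Fc) (hne : ((f Fc).det).re ≠ 0) :
    HasFDerivAt (fun X => Real.log ((f X).det).re)
      ((((f Fc).det.re)⁻¹) • (Complex.reCLM.comp ((stmt9_detDeriv (f Fc)).comp L))) Fc := by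
  have hdet := (stmt9_hasFDerivAt_det (f Fc)).comp Fc hf
  have hre := Complex.reCLM.hasFDerivAt.comp Fc hdet
  exact (Real.hasDerivAt_log hne).comp_hasFDerivAt Fc hre

/-- trace is nonnegative for psd matrices. -/
lemma stmt9_trace_nonneg {n : ℕ} {M : Matrix (Fin n) (Fin n) ℂ} (h : M.PosSemidef) :
    0 ≤ Matrix.trace M := by
  refine Finset.sum_nonneg fun i _ => ?_
  exact h.diag_nonneg

lemma stmt9_posdef_Q (Zh : Matrix (Fin mB) (Fin mA) ℂ) (Fs : Matrix (Fin mA) (Fin mA) ℂ)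
    (H : Matrix (Fin mR) (Fin mA) ℂ) (σ ς₁ ς₂ : ℝ) (hσ : 0 < σ)
    (Fc : Matrix (Fin mA) (Fin mc) ℂ) : (Qmat Zh Fs H σ ς₁ ς₂ Fc).PosDef := by
  have hpsd0 : (Fc * Fcᴴ + Fs * Fsᴴ).PosSemidef :=
    (Matrix.posSemidef_self_mul_conjTranspose Fc).add
      (Matrix.posSemidef_self_mul_conjTranspose Fs)
  have ht1 : 0 ≤ Matrix.trace (Fc * Fcᴴ + Fs * Fsᴴ) := stmt9_trace_nonneg hpsd0
  have ht2 : 0 ≤ Matrix.trace (H * (Fc * Fcᴴ + Fs * Fsᴴ) * Hᴴ) :=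
    stmt9_trace_nonneg (hpsd0.mul_mul_conjTranspose_same H)
  have hc1 : (0:ℂ) ≤ ((ς₁ : ℂ))^2 := by
    rw [show ((ς₁:ℂ))^2 = ((ς₁^2 : ℝ) : ℂ) by push_cast; ring]
    exact_mod_cast sq_nonneg ς₁
  have hc2 : (0:ℂ) ≤ ((ς₂ : ℂ))^2 := by
    rw [show ((ς₂:ℂ))^2 = ((ς₂^2 : ℝ) : ℂ) by push_cast; ring]
    exact_mod_cast sq_nonneg ς₂
  have hσ2 : (0:ℂ) < ((σ : ℂ))^2 := by
    rw [show ((σ:ℂ))^2 = ((σ^2 : ℝ) : ℂ) by push_cast; ring]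
    exact_mod_cast pow_pos hσ 2
  have hz : (0:ℂ) < ((σ : ℂ))^2 + ((ς₁ : ℂ))^2 * Matrix.trace (Fc * Fcᴴ + Fs * Fsᴴ)
      + ((ς₂ : ℂ))^2 * Matrix.trace (H * (Fc * Fcᴴ + Fs * Fsᴴ) * Hᴴ) := by
    have := add_pos_of_pos_of_nonneg
      (add_pos_of_pos_of_nonneg hσ2 (mul_nonneg hc1 ht1)) (mul_nonneg hc2 ht2)
    exact this
  have h1 : Zh * Fs * Fsᴴ * Zhᴴ = (Zh * Fs) * (Zh * Fs)ᴴ := by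
    simp [Matrix.conjTranspose_mul, Matrix.mul_assoc]
  have heq : Qmat Zh Fs H σ ς₁ ς₂ Fc
      = (((σ : ℂ))^2 + ((ς₁ : ℂ))^2 * Matrix.trace (Fc * Fcᴴ + Fs * Fsᴴ)
          + ((ς₂ : ℂ))^2 * Matrix.trace (H * (Fc * Fcᴴ + Fs * Fsᴴ) * Hᴴ))
            • (1 : Matrix (Fin mB) (Fin mB) ℂ)
        + (Zh * Fs) * (Zh * Fs)ᴴ := by
    rw [Qmat, h1, add_comm]
  rw [heq, Matrix.smul_one_eq_diagonal]
  exact (Matrix.posDef_diagonal_iff.mpr fun _ => hz).add_posSemidef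
    (Matrix.posSemidef_self_mul_conjTranspose (Zh * Fs))

lemma stmt9_posdef_E (Zh : Matrix (Fin mB) (Fin mA) ℂ) (Fs : Matrix (Fin mA) (Fin mA) ℂ)
    (H : Matrix (Fin mR) (Fin mA) ℂ) (σ ς₁ ς₂ : ℝ) (hσ : 0 < σ)
    (Fc : Matrix (Fin mA) (Fin mc) ℂ) : (Emat Zh Fs H σ ς₁ ς₂ Fc).PosDef := by
  have h1 : Zh * Fc * Fcᴴ * Zhᴴ = (Zh * Fc) * (Zh * Fc)ᴴ := by
    simp [Matrix.conjTranspose_mul, Matrix.mul_assoc]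
  rw [Emat, h1]
  exact (stmt9_posdef_Q Zh Fs H σ ς₁ ς₂ hσ Fc).add_posSemidef
    (Matrix.posSemidef_self_mul_conjTranspose (Zh * Fc))

lemma stmt9_alg (Zh : Matrix (Fin mB) (Fin mA) ℂ) (H : Matrix (Fin mR) (Fin mA) ℂ) (ς₁ ς₂ : ℝ)
    (Ei Qi : Matrix (Fin mB) (Fin mB) ℂ) (hEi : Eiᴴ = Ei) (hQi : Qiᴴ = Qi)
    (Fc D : Matrix (Fin mA) (Fin mc) ℂ) :
    Matrix.trace (Ei * ((((ς₁ : ℂ))^2 * Matrix.trace (Fc * Dᴴ + D * Fcᴴ)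
          + ((ς₂ : ℂ))^2 * Matrix.trace (H * (Fc * Dᴴ + D * Fcᴴ) * Hᴴ)) • 1
        + Zh * (Fc * Dᴴ + D * Fcᴴ) * Zhᴴ))
      - Matrix.trace (Qi * ((((ς₁ : ℂ))^2 * Matrix.trace (Fc * Dᴴ + D * Fcᴴ)
          + ((ς₂ : ℂ))^2 * Matrix.trace (H * (Fc * Dᴴ + D * Fcᴴ) * Hᴴ)) • 1))
    = Matrix.trace ((Zhᴴ * Ei * Zh * Fc
          - Matrix.trace (Qi - Ei)
              • ((((ς₁ : ℂ))^2 • (1 : Matrix (Fin mA) (Fin mA) ℂ) + ((ς₂ : ℂ))^2 • (Hᴴ * H)) * Fc))ᴴ * D)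
      + star (Matrix.trace ((Zhᴴ * Ei * Zh * Fc
          - Matrix.trace (Qi - Ei)
              • ((((ς₁ : ℂ))^2 • (1 : Matrix (Fin mA) (Fin mA) ℂ) + ((ς₂ : ℂ))^2 • (Hᴴ * H)) * Fc))ᴴ * D)) := by
  have c1 : Matrix.trace (Fcᴴ * (Zhᴴ * (Ei * (Zh * D))))
      = Matrix.trace (Ei * (Zh * (D * (Fcᴴ * Zhᴴ)))) := by
    simp only [← Matrix.mul_assoc]
    rw [Matrix.trace_mul_comm]
    simp only [← Matrix.mul_assoc]
    rw [Matrix.trace_mul_comm]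
    simp only [← Matrix.mul_assoc]
    rw [Matrix.trace_mul_comm]
    simp only [Matrix.mul_assoc]
  have c2 : Matrix.trace (Fcᴴ * D) = Matrix.trace (D * Fcᴴ) := Matrix.trace_mul_comm _ _
  have c3 : Matrix.trace (Fcᴴ * (Hᴴ * (H * D)))
      = Matrix.trace (H * (D * (Fcᴴ * Hᴴ))) := by
    simp only [← Matrix.mul_assoc]
    rw [Matrix.trace_mul_comm]
    simp only [← Matrix.mul_assoc]
    rw [Matrix.trace_mul_comm]
    simp only [Matrix.mul_assoc]
  have sT : (starRingEnd ℂ) (Matrix.trace (Ei * (Zh * (D * (Fcᴴ * Zhᴴ)))))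
      = Matrix.trace (Ei * (Zh * (Fc * (Dᴴ * Zhᴴ)))) := by
    rw [← Complex.star_def, ← Matrix.trace_conjTranspose]
    simp only [Matrix.conjTranspose_mul, Matrix.conjTranspose_conjTranspose, hEi]
    simp only [← Matrix.mul_assoc]
    rw [Matrix.trace_mul_comm]
    simp only [Matrix.mul_assoc]
  have sτ : (starRingEnd ℂ) (Matrix.trace (D * Fcᴴ)) = Matrix.trace (Fc * Dᴴ) := by
    rw [← Complex.star_def, ← Matrix.trace_conjTranspose]
    simp only [Matrix.conjTranspose_mul, Matrix.conjTranspose_conjTranspose]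
  have sη : (starRingEnd ℂ) (Matrix.trace (H * (D * (Fcᴴ * Hᴴ))))
      = Matrix.trace (H * (Fc * (Dᴴ * Hᴴ))) := by
    rw [← Complex.star_def, ← Matrix.trace_conjTranspose]
    simp only [Matrix.conjTranspose_mul, Matrix.conjTranspose_conjTranspose, Matrix.mul_assoc]
  have sE : (starRingEnd ℂ) (Matrix.trace Ei) = Matrix.trace Ei := by
    rw [← Complex.star_def, ← Matrix.trace_conjTranspose, hEi]
  have sQ : (starRingEnd ℂ) (Matrix.trace Qi) = Matrix.trace Qi := by
    rw [← Complex.star_def, ← Matrix.trace_conjTranspose, hQi]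
  simp only [Matrix.mul_add, Matrix.add_mul, Matrix.sub_mul, Matrix.mul_smul, Matrix.smul_mul,
    Matrix.trace_add, Matrix.trace_sub, Matrix.trace_smul, Matrix.mul_one, Matrix.one_mul,
    Matrix.conjTranspose_mul, Matrix.conjTranspose_smul, Matrix.conjTranspose_one,
    Matrix.conjTranspose_conjTranspose, Matrix.conjTranspose_sub, hEi, Matrix.mul_assoc,
    smul_eq_mul, star_add, star_sub, star_mul', star_pow, star_smul, smul_smul, Complex.star_def,
    Complex.conj_ofReal, map_pow, map_add, map_sub, _root_.map_mul, Complex.conj_conj]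
  simp only [Matrix.conjTranspose_add, Matrix.conjTranspose_smul, Matrix.add_mul, Matrix.smul_mul,
    Matrix.trace_add, Matrix.trace_smul, smul_eq_mul, Matrix.mul_assoc, map_add, map_sub,
    _root_.map_mul, star_pow, Complex.star_def, Complex.conj_ofReal, map_pow, Complex.conj_conj,
    Matrix.conjTranspose_conjTranspose, Matrix.conjTranspose_one, Matrix.conjTranspose_mul]
  rw [c1, c2, c3, sT, sτ, sη, sE, sQ]
  ring

end Stmt9Aux

/-- `C(F_c) = ln det E(F_c) − ln det Q(F_c)` is well defined
(`Q(F_c)` and `E(F_c)` are Hermitian positive definite with positive real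
determinants) and real-Fréchet differentiable in `F_c`, with derivative in
direction `D` equal to `2 Re tr(Gᴴ D)`, where
`G = Ẑᴴ E(F_c)⁻¹ Ẑ F_c − tr(Q(F_c)⁻¹ − E(F_c)⁻¹)(ς₁² I + ς₂² Hᴴ H) F_c` is the
Wirtinger gradient of `C` with respect to `F_c`. -/
theorem stmt9 (hmA : 0 < mA) (hmB : 0 < mB) (hmR : 0 < mR) (hmc : 0 < mc)
    (Zh : Matrix (Fin mB) (Fin mA) ℂ) (Fs : Matrix (Fin mA) (Fin mA) ℂ)
    (H : Matrix (Fin mR) (Fin mA) ℂ) (σ ς₁ ς₂ : ℝ)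
    (hσ : 0 < σ) (hς₁ : 0 ≤ ς₁) (hς₂ : 0 ≤ ς₂) :
    (∀ Fc : Matrix (Fin mA) (Fin mc) ℂ,
      (Qmat Zh Fs H σ ς₁ ς₂ Fc).PosDef ∧ (Emat Zh Fs H σ ς₁ ς₂ Fc).PosDef ∧
      ((Qmat Zh Fs H σ ς₁ ς₂ Fc).det).im = 0 ∧ 0 < ((Qmat Zh Fs H σ ς₁ ς₂ Fc).det).re ∧
      ((Emat Zh Fs H σ ς₁ ς₂ Fc).det).im = 0 ∧ 0 < ((Emat Zh Fs H σ ς₁ ς₂ Fc).det).re) ∧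
    ∀ Fc : Matrix (Fin mA) (Fin mc) ℂ, ∃ L : Matrix (Fin mA) (Fin mc) ℂ →L[ℝ] ℝ,
      HasFDerivAt (rateFun Zh Fs H σ ς₁ ς₂) L Fc ∧
      ∀ D : Matrix (Fin mA) (Fin mc) ℂ,
        L D = 2 * (Matrix.trace ((rateGrad Zh Fs H σ ς₁ ς₂ Fc)ᴴ * D)).re := by
  have hQpd : ∀ Fc : Matrix (Fin mA) (Fin mc) ℂ, (Qmat Zh Fs H σ ς₁ ς₂ Fc).PosDef :=
    fun Fc => stmt9_posdef_Q Zh Fs H σ ς₁ ς₂ hσ Fc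
  have hEpd : ∀ Fc : Matrix (Fin mA) (Fin mc) ℂ, (Emat Zh Fs H σ ς₁ ς₂ Fc).PosDef :=
    fun Fc => stmt9_posdef_E Zh Fs H σ ς₁ ς₂ hσ Fc
  have hQdet : ∀ Fc : Matrix (Fin mA) (Fin mc) ℂ,
      ((Qmat Zh Fs H σ ς₁ ς₂ Fc).det).im = 0 ∧ 0 < ((Qmat Zh Fs H σ ς₁ ς₂ Fc).det).re := by
    intro Fc
    have := (hQpd Fc).det_pos
    rw [Complex.lt_def] at this
    exact ⟨this.2.symm ▸ rfl, by simpa using this.1⟩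
  have hEdet : ∀ Fc : Matrix (Fin mA) (Fin mc) ℂ,
      ((Emat Zh Fs H σ ς₁ ς₂ Fc).det).im = 0 ∧ 0 < ((Emat Zh Fs H σ ς₁ ς₂ Fc).det).re := by
    intro Fc
    have := (hEpd Fc).det_pos
    rw [Complex.lt_def] at this
    exact ⟨this.2.symm ▸ rfl, by simpa using this.1⟩
  refine ⟨fun Fc => ⟨hQpd Fc, hEpd Fc, (hQdet Fc).1, (hQdet Fc).2, (hEdet Fc).1, (hEdet Fc).2⟩, ?_⟩
  intro Fc
  have hQne : ((Qmat Zh Fs H σ ς₁ ς₂ Fc).det).re ≠ 0 := ne_of_gt (hQdet Fc).2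
  have hEne : ((Emat Zh Fs H σ ς₁ ς₂ Fc).det).re ≠ 0 := ne_of_gt (hEdet Fc).2
  -- the derivatives of the two log-det pieces
  have hE := stmt9_hasFDerivAt_logdet (stmt9_hasFDerivAt_Emat Zh Fs H σ ς₁ ς₂ Fc) hEne
  have hQ := stmt9_hasFDerivAt_logdet (stmt9_hasFDerivAt_Qmat Zh Fs H σ ς₁ ς₂ Fc) hQne
  refine ⟨_, hE.sub hQ, ?_⟩
  intro D
  -- abbreviations
  set Em := Emat Zh Fs H σ ς₁ ς₂ Fc with hEm
  set Qm := Qmat Zh Fs H σ ς₁ ς₂ Fc with hQm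
  have hEim : Em.det.im = 0 := (hEdet Fc).1
  have hQim : Qm.det.im = 0 := (hQdet Fc).1
  -- adjugate-to-inverse conversion
  have hadj : ∀ (M : Matrix (Fin mB) (Fin mB) ℂ), M.PosDef →
      ∀ X, Matrix.trace (Matrix.adjugate M * X) = M.det * Matrix.trace (M⁻¹ * X) := by
    intro M hM X
    have hdet0 : M.det ≠ 0 := hM.det_pos.ne'
    have hMadj : Matrix.adjugate M = M.det • M⁻¹ := by
      rw [Matrix.inv_def, smul_smul, Ring.inverse_eq_inv', mul_inv_cancel₀ hdet0, one_smul]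
    rw [hMadj, Matrix.smul_mul, Matrix.trace_smul, smul_eq_mul]
  -- evaluate the derivative
  have hre : ∀ (z : ℂ) (d : ℂ), d.im = 0 → (d * z).re = d.re * z.re := by
    intro z d hd
    rw [Complex.mul_re, hd]
    ring
  show ((Em.det.re)⁻¹ • (Complex.reCLM.comp ((stmt9_detDeriv Em).comp
      ((stmt9_lQ H ς₁ ς₂ mB + stmt9_lZ Zh).comp (stmt9_sqDeriv Fc))))) D
    - ((Qm.det.re)⁻¹ • (Complex.reCLM.comp ((stmt9_detDeriv Qm).comp
      ((stmt9_lQ H ς₁ ς₂ mB).comp (stmt9_sqDeriv Fc))))) D = _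
  simp only [ContinuousLinearMap.sub_apply, ContinuousLinearMap.smul_apply,
    ContinuousLinearMap.comp_apply, Complex.reCLM_apply, ContinuousLinearMap.add_apply,
    stmt9_detDeriv_apply, stmt9_sqDeriv_apply, stmt9_lQ_apply, stmt9_lZ_apply, smul_eq_mul]
  rw [hadj Em (hEpd Fc), hadj Qm (hQpd Fc), hre _ _ hEim, hre _ _ hQim,
    ← mul_assoc, ← mul_assoc, inv_mul_cancel₀ hEne, inv_mul_cancel₀ hQne, one_mul, one_mul]
  have halg := stmt9_alg Zh H ς₁ ς₂ (Em⁻¹) (Qm⁻¹)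
    ((hEpd Fc).isHermitian.inv) ((hQpd Fc).isHermitian.inv) Fc D
  have hsplit : (Matrix.trace (Em⁻¹ * ((((ς₁ : ℂ))^2 * Matrix.trace (Fc * Dᴴ + D * Fcᴴ)
          + ((ς₂ : ℂ))^2 * Matrix.trace (H * (Fc * Dᴴ + D * Fcᴴ) * Hᴴ)) • 1
        + Zh * (Fc * Dᴴ + D * Fcᴴ) * Zhᴴ))
      - Matrix.trace (Qm⁻¹ * ((((ς₁ : ℂ))^2 * Matrix.trace (Fc * Dᴴ + D * Fcᴴ)
          + ((ς₂ : ℂ))^2 * Matrix.trace (H * (Fc * Dᴴ + D * Fcᴴ) * Hᴴ)) • 1))).re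
      = 2 * (Matrix.trace ((rateGrad Zh Fs H σ ς₁ ς₂ Fc)ᴴ * D)).re := by
    rw [halg]
    simp only [rateGrad, ← hEm, ← hQm, Complex.add_re]
    rw [Complex.star_def, Complex.conj_re]
    ring
  rw [← hsplit, Complex.sub_re]

end RateGradient
end

section
/- The function C(θ) = ln det(E(θ)) − ln det(Q(θ)) is well defined (both determinants are positive reals since Q(θ) and E(θ) are Hermitian positive definite) and is differentiable with respect to θ in the real (Fréchet) sense, and its derivative at θ in an arbitrary direction d ∈ ℂ^{m_R} equals 2 Re(g^H d), where g = vecd( Ĥ_RB^H ( E(θ)^{-1} Ẑ(θ) F_c F_c^H − (Q(θ)^{-1} − E(θ)^{-1}) Ẑ(θ) F_s F_s^H ) H_AR^H ). Equivalently, the Wirtinger gradient of C with respect to θ is g, which establishes the rate-gradient expression used in the RIS phase-shift update. -/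
open Matrix
open scoped ComplexOrder

section ThetaGradient

variable {mA mB mR mc : ℕ}

/-- The composite channel `Ẑ(θ) = Ĥ_AB + Ĥ_RB diag(θ) H_AR`. -/
noncomputable def Zθ (HAB : Matrix (Fin mB) (Fin mA) ℂ) (HRB : Matrix (Fin mB) (Fin mR) ℂ)
    (HAR : Matrix (Fin mR) (Fin mA) ℂ) (θ : Fin mR → ℂ) : Matrix (Fin mB) (Fin mA) ℂ :=
  HAB + HRB * Matrix.diagonal θ * HAR

/-- `Q(θ) = Ẑ(θ) F_s F_sᴴ Ẑ(θ)ᴴ + c I`. -/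
noncomputable def Qθ (HAB : Matrix (Fin mB) (Fin mA) ℂ) (HRB : Matrix (Fin mB) (Fin mR) ℂ)
    (HAR : Matrix (Fin mR) (Fin mA) ℂ) (Fs : Matrix (Fin mA) (Fin mA) ℂ) (c : ℝ)
    (θ : Fin mR → ℂ) : Matrix (Fin mB) (Fin mB) ℂ :=
  Zθ HAB HRB HAR θ * Fs * Fsᴴ * (Zθ HAB HRB HAR θ)ᴴ
    + (c : ℂ) • (1 : Matrix (Fin mB) (Fin mB) ℂ)

/-- `E(θ) = Q(θ) + Ẑ(θ) F_c F_cᴴ Ẑ(θ)ᴴ`. -/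
noncomputable def Eθ (HAB : Matrix (Fin mB) (Fin mA) ℂ) (HRB : Matrix (Fin mB) (Fin mR) ℂ)
    (HAR : Matrix (Fin mR) (Fin mA) ℂ) (Fc : Matrix (Fin mA) (Fin mc) ℂ)
    (Fs : Matrix (Fin mA) (Fin mA) ℂ) (c : ℝ) (θ : Fin mR → ℂ) :
    Matrix (Fin mB) (Fin mB) ℂ :=
  Qθ HAB HRB HAR Fs c θ + Zθ HAB HRB HAR θ * Fc * Fcᴴ * (Zθ HAB HRB HAR θ)ᴴ

/-- The achievable rate `C(θ) = ln det E(θ) − ln det Q(θ)` (both determinants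
are positive reals). -/
noncomputable def rateFunθ (HAB : Matrix (Fin mB) (Fin mA) ℂ) (HRB : Matrix (Fin mB) (Fin mR) ℂ)
    (HAR : Matrix (Fin mR) (Fin mA) ℂ) (Fc : Matrix (Fin mA) (Fin mc) ℂ)
    (Fs : Matrix (Fin mA) (Fin mA) ℂ) (c : ℝ) (θ : Fin mR → ℂ) : ℝ :=
  Real.log ((Eθ HAB HRB HAR Fc Fs c θ).det).re - Real.log ((Qθ HAB HRB HAR Fs c θ).det).re

/-- The Wirtinger gradient
`g = vecd(Ĥ_RBᴴ (E(θ)⁻¹ Ẑ(θ) F_c F_cᴴ − (Q(θ)⁻¹ − E(θ)⁻¹) Ẑ(θ) F_s F_sᴴ) H_ARᴴ)`. -/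
noncomputable def rateGradθ (HAB : Matrix (Fin mB) (Fin mA) ℂ) (HRB : Matrix (Fin mB) (Fin mR) ℂ)
    (HAR : Matrix (Fin mR) (Fin mA) ℂ) (Fc : Matrix (Fin mA) (Fin mc) ℂ)
    (Fs : Matrix (Fin mA) (Fin mA) ℂ) (c : ℝ) (θ : Fin mR → ℂ) : Fin mR → ℂ :=
  fun i =>
    (HRBᴴ * ((Eθ HAB HRB HAR Fc Fs c θ)⁻¹ * Zθ HAB HRB HAR θ * Fc * Fcᴴ
        - ((Qθ HAB HRB HAR Fs c θ)⁻¹ - (Eθ HAB HRB HAR Fc Fs c θ)⁻¹)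
            * Zθ HAB HRB HAR θ * Fs * Fsᴴ) * HARᴴ) i i


attribute [local instance] Matrix.normedAddCommGroup Matrix.normedSpace

namespace JacobiAux

variable {n : ℕ}

/-- entry projection as a CLM -/
noncomputable def entryCLM (i j : Fin n) : Matrix (Fin n) (Fin n) ℂ →L[ℝ] ℂ :=
  LinearMap.toContinuousLinearMap
    { toFun := fun M => M i j
      map_add' := fun _ _ => rfl
      map_smul' := fun _ _ => rfl }

@[simp] lemma entryCLM_apply (i j : Fin n) (M : Matrix (Fin n) (Fin n) ℂ) :
    entryCLM i j M = M i j := rfl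

/-- the trace-adjugate CLM -/
noncomputable def traceAdjCLM (A : Matrix (Fin n) (Fin n) ℂ) :
    Matrix (Fin n) (Fin n) ℂ →L[ℝ] ℂ :=
  LinearMap.toContinuousLinearMap
    { toFun := fun B => (Matrix.adjugate A * B).trace
      map_add' := fun X Y => by
        show (Matrix.adjugate A * (X + Y)).trace = _
        rw [Matrix.mul_add, Matrix.trace_add]
      map_smul' := fun r X => by
        show (Matrix.adjugate A * (r • X)).trace = r • (Matrix.adjugate A * X).trace
        rw [Matrix.mul_smul, Matrix.trace_smul] }

@[simp] lemma traceAdjCLM_apply (A B : Matrix (Fin n) (Fin n) ℂ) :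
    traceAdjCLM A B = (Matrix.adjugate A * B).trace := rfl

lemma det_updateRow_expand (A : Matrix (Fin n) (Fin n) ℂ) (j : Fin n) (r : Fin n → ℂ) :
    (A.updateRow j r).det = ∑ i, r i * Matrix.adjugate A i j := by
  have hdet : ∀ s : Fin n → ℂ, (A.updateRow j s).det
      = Matrix.detRowAlternating.toMultilinearMap.toLinearMap A j s := by
    intro s
    rfl
  have hr : r = ∑ i, Pi.single i (r i) := by
    rw [Finset.univ_sum_single]
  calc (A.updateRow j r).det
      = Matrix.detRowAlternating.toMultilinearMap.toLinearMap A j r := hdet r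
    _ = ∑ i, r i * Matrix.adjugate A i j := by
        conv_lhs => rw [hr]
        rw [map_sum]
        refine Finset.sum_congr rfl fun i _ => ?_
        have : Pi.single i (r i) = r i • (Pi.single i (1 : ℂ) : Fin n → ℂ) := by
          rw [← Pi.single_smul, smul_eq_mul, mul_one]
        rw [this, LinearMap.map_smul, smul_eq_mul]
        congr 1
        rw [← hdet, Matrix.adjugate_apply]


lemma trace_adj_eq_sum_det (A B : Matrix (Fin n) (Fin n) ℂ) :
    (Matrix.adjugate A * B).trace = ∑ j, (A.updateRow j (B j)).det := by
  simp_rw [det_updateRow_expand, Matrix.trace, Matrix.diag, Matrix.mul_apply]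
  rw [Finset.sum_comm]
  refine Finset.sum_congr rfl fun j _ => Finset.sum_congr rfl fun i _ => mul_comm _ _

theorem hasFDerivAt_det (A : Matrix (Fin n) (Fin n) ℂ) :
    HasFDerivAt (fun M : Matrix (Fin n) (Fin n) ℂ => M.det) (traceAdjCLM A) A := by
  classical
  have key : ∀ σ : Equiv.Perm (Fin n),
      HasFDerivAt (fun M : Matrix (Fin n) (Fin n) ℂ => ∏ i, M (σ i) i)
        ((∑ i, (∏ j ∈ Finset.univ.erase i, A (σ j) j) • ContinuousLinearMap.proj i).comp
          (ContinuousLinearMap.pi fun i => entryCLM (σ i) i)) A := by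
    intro σ
    have hrows : HasFDerivAt (fun M : Matrix (Fin n) (Fin n) ℂ => fun i => M (σ i) i)
        (ContinuousLinearMap.pi fun i => entryCLM (σ i) i) A :=
      (ContinuousLinearMap.pi fun i => entryCLM (σ i) i).hasFDerivAt
    exact (hasFDerivAt_finset_prod (𝕜 := ℝ) (u := Finset.univ)
      (x := fun i => A (σ i) i)).comp A hrows
  have hsum : HasFDerivAt
      (fun M : Matrix (Fin n) (Fin n) ℂ =>
        ∑ σ : Equiv.Perm (Fin n), (((Equiv.Perm.sign σ : ℤ) : ℂ)) * ∏ i, M (σ i) i)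
      (∑ σ : Equiv.Perm (Fin n), (((Equiv.Perm.sign σ : ℤ) : ℂ)) •
        ((∑ i, (∏ j ∈ Finset.univ.erase i, A (σ j) j) • ContinuousLinearMap.proj i).comp
          (ContinuousLinearMap.pi fun i => entryCLM (σ i) i))) A :=
    HasFDerivAt.fun_sum fun σ _ => (key σ).const_mul _
  have hfun : (fun M : Matrix (Fin n) (Fin n) ℂ => M.det)
      = fun M => ∑ σ : Equiv.Perm (Fin n), (((Equiv.Perm.sign σ : ℤ) : ℂ)) * ∏ i, M (σ i) i := by
    funext M; exact Matrix.det_apply' M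
  rw [hfun]
  convert hsum using 1
  ext B
  simp only [traceAdjCLM_apply, ContinuousLinearMap.coe_sum', Finset.sum_apply,
    ContinuousLinearMap.coe_smul', Pi.smul_apply, ContinuousLinearMap.coe_comp',
    Function.comp_apply, ContinuousLinearMap.proj_apply, ContinuousLinearMap.coe_pi,
    entryCLM_apply, smul_eq_mul]
  rw [trace_adj_eq_sum_det]
  simp_rw [Matrix.det_apply']
  rw [Finset.sum_comm]
  refine Finset.sum_congr rfl fun σ _ => ?_
  rw [← Finset.mul_sum]
  congr 1
  refine (Fintype.sum_equiv σ _ _ fun i => ?_).symm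
  rw [← Finset.mul_prod_erase Finset.univ _ (Finset.mem_univ i), Matrix.updateRow_self,
    mul_comm]
  congr 1
  refine Finset.prod_congr rfl fun k hk => ?_
  have hki : k ≠ i := (Finset.mem_erase.mp hk).1
  exact (congrFun (Matrix.updateRow_ne (σ.injective.ne hki)) k).symm

lemma posDef_det_im {A : Matrix (Fin n) (Fin n) ℂ} (hA : A.PosDef) : (A.det).im = 0 :=
  ((Complex.lt_def.mp hA.det_pos).2).symm

lemma posDef_det_re_pos {A : Matrix (Fin n) (Fin n) ℂ} (hA : A.PosDef) : 0 < (A.det).re :=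
  (Complex.lt_def.mp hA.det_pos).1

lemma adjugate_eq_det_smul_inv {A : Matrix (Fin n) (Fin n) ℂ} (hA : A.det ≠ 0) :
    Matrix.adjugate A = A.det • A⁻¹ := by
  rw [Matrix.inv_def, smul_smul, Ring.inverse_eq_inv', mul_inv_cancel₀ hA, one_smul]

theorem hasFDerivAt_logdet {D : Type*} [NormedAddCommGroup D] [NormedSpace ℝ D]
    {f : D → Matrix (Fin n) (Fin n) ℂ} {f' : D →L[ℝ] Matrix (Fin n) (Fin n) ℂ} {θ : D}
    (hf : HasFDerivAt f f' θ) (hpos : (f θ).PosDef) :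
    HasFDerivAt (fun x => Real.log ((f x).det).re)
      ((((f θ).det.re)⁻¹ • (Complex.reCLM.comp ((traceAdjCLM (f θ)).comp f')))) θ ∧
    ∀ d, ((((f θ).det.re)⁻¹ • (Complex.reCLM.comp ((traceAdjCLM (f θ)).comp f')))) d
        = (((f θ)⁻¹ * f' d).trace).re := by
  have hrepos := posDef_det_re_pos hpos
  have him := posDef_det_im hpos
  have hdne : (f θ).det ≠ 0 := fun h => by simp [h] at hrepos
  constructor
  · have hdet : HasFDerivAt (fun x => (f x).det) ((traceAdjCLM (f θ)).comp f') θ :=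
      (hasFDerivAt_det (f θ)).comp θ hf
    have hre : HasFDerivAt (fun x => ((f x).det).re)
        (Complex.reCLM.comp ((traceAdjCLM (f θ)).comp f')) θ :=
      (Complex.reCLM.hasFDerivAt.restrictScalars ℝ).comp θ hdet
    have hlog := (Real.hasDerivAt_log (ne_of_gt hrepos)).comp_hasFDerivAt θ hre
    exact hlog
  · intro d
    have : Matrix.adjugate (f θ) * f' d = (f θ).det • ((f θ)⁻¹ * f' d) := by
      rw [adjugate_eq_det_smul_inv hdne, Matrix.smul_mul]
    simp only [ContinuousLinearMap.coe_smul', Pi.smul_apply, ContinuousLinearMap.coe_comp',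
      Function.comp_apply, Complex.reCLM_coe, traceAdjCLM_apply, this, Matrix.trace_smul]
    set w := ((f θ)⁻¹ * f' d).trace
    have : ((f θ).det • w).re = (f θ).det.re * w.re := by
      rw [smul_eq_mul, Complex.mul_re, him]
      ring
    show (f θ).det.re⁻¹ • ((f θ).det • w).re = w.re
    rw [this, smul_eq_mul, ← mul_assoc, inv_mul_cancel₀ (ne_of_gt hrepos), one_mul]

end JacobiAux

namespace Stmt10Aux

open JacobiAux

variable {mA mB mR mc : ℕ}

/-! ### CLM constructors -/

noncomputable def LzCLM (HRB : Matrix (Fin mB) (Fin mR) ℂ) (HAR : Matrix (Fin mR) (Fin mA) ℂ) :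
    (Fin mR → ℂ) →L[ℝ] Matrix (Fin mB) (Fin mA) ℂ :=
  LinearMap.toContinuousLinearMap
    { toFun := fun d => HRB * Matrix.diagonal d * HAR
      map_add' := fun d e => by
        have : Matrix.diagonal (d + e) = Matrix.diagonal d + Matrix.diagonal e := by
          ext i j
          by_cases h : i = j <;> simp [Matrix.diagonal_apply, h]
        show HRB * Matrix.diagonal (d + e) * HAR = _
        rw [this, Matrix.mul_add, Matrix.add_mul]
      map_smul' := fun r d => by
        have : Matrix.diagonal (r • d) = r • Matrix.diagonal d := by
          ext i j
          by_cases h : i = j <;> simp [Matrix.diagonal_apply, h]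
        show HRB * Matrix.diagonal (r • d) * HAR = r • (HRB * Matrix.diagonal d * HAR)
        rw [this, Matrix.mul_smul, Matrix.smul_mul] }

@[simp] lemma LzCLM_apply (HRB : Matrix (Fin mB) (Fin mR) ℂ) (HAR : Matrix (Fin mR) (Fin mA) ℂ)
    (d : Fin mR → ℂ) : LzCLM HRB HAR d = HRB * Matrix.diagonal d * HAR := rfl

noncomputable def conjTCLM {m n : ℕ} :
    Matrix (Fin m) (Fin n) ℂ →L[ℝ] Matrix (Fin n) (Fin m) ℂ :=
  LinearMap.toContinuousLinearMap
    { toFun := fun X => Xᴴ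
      map_add' := fun X Y => Matrix.conjTranspose_add X Y
      map_smul' := fun r X => by
        show (r • X)ᴴ = r • Xᴴ
        rw [Matrix.conjTranspose_smul, star_trivial] }

@[simp] lemma conjTCLM_apply {m n : ℕ} (X : Matrix (Fin m) (Fin n) ℂ) :
    conjTCLM X = Xᴴ := rfl

noncomputable def sandwichCLM (P : Matrix (Fin mA) (Fin mA) ℂ) :
    Matrix (Fin mB) (Fin mA) ℂ →L[ℝ] Matrix (Fin mA) (Fin mB) ℂ →L[ℝ]
      Matrix (Fin mB) (Fin mB) ℂ :=
  LinearMap.toContinuousLinearMap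
    { toFun := fun X => LinearMap.toContinuousLinearMap
        { toFun := fun Y => X * P * Y
          map_add' := fun Y Z => by
            show X * P * (Y + Z) = _
            rw [Matrix.mul_add]
          map_smul' := fun r Y => by
            show X * P * (r • Y) = r • (X * P * Y)
            rw [Matrix.mul_smul] }
      map_add' := fun X X' => by
        ext Y
        simp [LinearMap.coe_toContinuousLinearMap', Matrix.add_mul]
      map_smul' := fun r X => by
        ext Y
        simp [LinearMap.coe_toContinuousLinearMap', Matrix.smul_mul] }

@[simp] lemma sandwichCLM_apply (P : Matrix (Fin mA) (Fin mA) ℂ)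
    (X : Matrix (Fin mB) (Fin mA) ℂ) (Y : Matrix (Fin mA) (Fin mB) ℂ) :
    sandwichCLM P X Y = X * P * Y := rfl

/-! ### derivative of Z -/

lemma hasFDerivAt_Z (HAB : Matrix (Fin mB) (Fin mA) ℂ) (HRB : Matrix (Fin mB) (Fin mR) ℂ)
    (HAR : Matrix (Fin mR) (Fin mA) ℂ) (θ : Fin mR → ℂ) :
    HasFDerivAt (fun x : Fin mR → ℂ => HAB + HRB * Matrix.diagonal x * HAR)
      (LzCLM HRB HAR) θ :=
  (LzCLM HRB HAR).hasFDerivAt.const_add HAB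

/-- derivative of the generic sandwich map `x ↦ Z x * P * (Z x)ᴴ + C0` -/
lemma hasFDerivAt_sandwich (HAB : Matrix (Fin mB) (Fin mA) ℂ)
    (HRB : Matrix (Fin mB) (Fin mR) ℂ) (HAR : Matrix (Fin mR) (Fin mA) ℂ)
    (P : Matrix (Fin mA) (Fin mA) ℂ) (C0 : Matrix (Fin mB) (Fin mB) ℂ) (θ : Fin mR → ℂ) :
    ∃ D : (Fin mR → ℂ) →L[ℝ] Matrix (Fin mB) (Fin mB) ℂ,
      HasFDerivAt (fun x : Fin mR → ℂ =>
        (HAB + HRB * Matrix.diagonal x * HAR) * P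
          * (HAB + HRB * Matrix.diagonal x * HAR)ᴴ + C0) D θ ∧
      ∀ d, D d = (HRB * Matrix.diagonal d * HAR) * P
            * (HAB + HRB * Matrix.diagonal θ * HAR)ᴴ
          + (HAB + HRB * Matrix.diagonal θ * HAR) * P
            * (HRB * Matrix.diagonal d * HAR)ᴴ := by
  have hZ := hasFDerivAt_Z HAB HRB HAR θ
  have hZH : HasFDerivAt (fun x : Fin mR → ℂ => (HAB + HRB * Matrix.diagonal x * HAR)ᴴ)
      (conjTCLM.comp (LzCLM HRB HAR)) θ :=
    (conjTCLM.hasFDerivAt).comp θ hZ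
  have hmain := (sandwichCLM P).hasFDerivAt_of_bilinear hZ hZH
  refine ⟨_, hmain.add_const C0, fun d => ?_⟩
  change (HAB + HRB * Matrix.diagonal θ * HAR) * P * (HRB * Matrix.diagonal d * HAR)ᴴ
    + (HRB * Matrix.diagonal d * HAR) * P * (HAB + HRB * Matrix.diagonal θ * HAR)ᴴ = _
  rw [add_comm]

/-! ### positive definiteness -/

lemma posDef_cI {m : ℕ} {c : ℝ} (hc : 0 < c) :
    ((c : ℂ) • (1 : Matrix (Fin m) (Fin m) ℂ)).PosDef := by
  have h : (c : ℂ) • (1 : Matrix (Fin m) (Fin m) ℂ) = Matrix.diagonal (fun _ => (c : ℂ)) := by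
    ext i j
    by_cases h : i = j <;> simp [Matrix.one_apply, Matrix.diagonal_apply, h]
  rw [h]
  refine Matrix.PosDef.diagonal fun i => ?_
  exact_mod_cast hc

lemma posDef_sandwich_cI {k : ℕ} (Z : Matrix (Fin mB) (Fin mA) ℂ)
    (F : Matrix (Fin mA) (Fin k) ℂ) {c : ℝ} (hc : 0 < c) :
    (Z * F * Fᴴ * Zᴴ + (c : ℂ) • (1 : Matrix (Fin mB) (Fin mB) ℂ)).PosDef := by
  have h : Z * F * Fᴴ * Zᴴ = (Z * F) * (Z * F)ᴴ := by
    rw [Matrix.conjTranspose_mul]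
    simp only [Matrix.mul_assoc]
  rw [h]
  exact Matrix.PosDef.posSemidef_add (Matrix.posSemidef_self_mul_conjTranspose _) (posDef_cI hc)

lemma posSemidef_sandwich {k : ℕ} (Z : Matrix (Fin mB) (Fin mA) ℂ)
    (F : Matrix (Fin mA) (Fin k) ℂ) :
    (Z * F * Fᴴ * Zᴴ).PosSemidef := by
  have h : Z * F * Fᴴ * Zᴴ = (Z * F) * (Z * F)ᴴ := by
    rw [Matrix.conjTranspose_mul]
    simp only [Matrix.mul_assoc]
  rw [h]
  exact Matrix.posSemidef_self_mul_conjTranspose _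

/-! ### trace computation -/

lemma key_trace (Qm : Matrix (Fin mB) (Fin mB) ℂ) (hQH : Qm⁻¹ᴴ = Qm⁻¹)
    (P : Matrix (Fin mA) (Fin mA) ℂ) (hP : Pᴴ = P) (Z : Matrix (Fin mB) (Fin mA) ℂ)
    (HRB : Matrix (Fin mB) (Fin mR) ℂ) (HAR : Matrix (Fin mR) (Fin mA) ℂ) (d : Fin mR → ℂ) :
    ((Qm⁻¹ * ((HRB * Matrix.diagonal d * HAR) * P * Zᴴ
        + Z * P * (HRB * Matrix.diagonal d * HAR)ᴴ)).trace).re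
      = 2 * (∑ i, d i * (HAR * P * Zᴴ * Qm⁻¹ * HRB) i i).re := by
  set W := HRB * Matrix.diagonal d * HAR with hW
  have hT1 : (Qm⁻¹ * (W * P * Zᴴ)).trace
      = ∑ i, d i * (HAR * P * Zᴴ * Qm⁻¹ * HRB) i i := by
    have e1 : Qm⁻¹ * (W * P * Zᴴ) = (Qm⁻¹ * HRB * Matrix.diagonal d) * (HAR * P * Zᴴ) := by
      rw [hW]; simp only [Matrix.mul_assoc]
    rw [e1, Matrix.trace_mul_comm]
    have e2 : HAR * P * Zᴴ * (Qm⁻¹ * HRB * Matrix.diagonal d)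
        = (HAR * P * Zᴴ * Qm⁻¹ * HRB) * Matrix.diagonal d := by
      simp only [Matrix.mul_assoc]
    rw [e2, Matrix.trace]
    refine Finset.sum_congr rfl fun i _ => ?_
    rw [Matrix.diag_apply, Matrix.mul_diagonal, mul_comm]
  have hT2 : ((Qm⁻¹ * (Z * P * Wᴴ)).trace).re = ((Qm⁻¹ * (W * P * Zᴴ)).trace).re := by
    have e3 : (Qm⁻¹ * (Z * P * Wᴴ))ᴴ = (W * P * Zᴴ) * Qm⁻¹ := by
      simp only [Matrix.conjTranspose_mul, Matrix.conjTranspose_conjTranspose, hQH, hP,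
        Matrix.mul_assoc]
    have e4 : (star ((Qm⁻¹ * (Z * P * Wᴴ)).trace)) = (Qm⁻¹ * (W * P * Zᴴ)).trace := by
      rw [← Matrix.trace_conjTranspose, e3, Matrix.trace_mul_comm]
    calc ((Qm⁻¹ * (Z * P * Wᴴ)).trace).re
        = ((starRingEnd ℂ) ((Qm⁻¹ * (Z * P * Wᴴ)).trace)).re := (Complex.conj_re _).symm
      _ = ((Qm⁻¹ * (W * P * Zᴴ)).trace).re := by rw [← e4]; rfl
  rw [Matrix.mul_add, Matrix.trace_add, Complex.add_re, hT2, hT1]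
  ring

end Stmt10Aux

/-- `C(θ) = ln det E(θ) − ln det Q(θ)` is well defined
(`Q(θ)` and `E(θ)` are Hermitian positive definite with positive real
determinants) and real-Fréchet differentiable in `θ ∈ ℂ^{m_R}`, with
derivative in direction `d` equal to `2 Re(gᴴ d)`, where
`g = vecd(Ĥ_RBᴴ (E(θ)⁻¹ Ẑ(θ) F_c F_cᴴ − (Q(θ)⁻¹ − E(θ)⁻¹) Ẑ(θ) F_s F_sᴴ) H_ARᴴ)`
is the Wirtinger gradient of `C` with respect to `θ`. -/
theorem stmt10 (hmA : 0 < mA) (hmB : 0 < mB) (hmR : 0 < mR) (hmc : 0 < mc)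
    (HAB : Matrix (Fin mB) (Fin mA) ℂ) (HRB : Matrix (Fin mB) (Fin mR) ℂ)
    (HAR : Matrix (Fin mR) (Fin mA) ℂ) (Fc : Matrix (Fin mA) (Fin mc) ℂ)
    (Fs : Matrix (Fin mA) (Fin mA) ℂ) (c : ℝ) (hc : 0 < c) :
    (∀ θ : Fin mR → ℂ,
      (Qθ HAB HRB HAR Fs c θ).PosDef ∧ (Eθ HAB HRB HAR Fc Fs c θ).PosDef ∧
      ((Qθ HAB HRB HAR Fs c θ).det).im = 0 ∧ 0 < ((Qθ HAB HRB HAR Fs c θ).det).re ∧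
      ((Eθ HAB HRB HAR Fc Fs c θ).det).im = 0 ∧ 0 < ((Eθ HAB HRB HAR Fc Fs c θ).det).re) ∧
    ∀ θ : Fin mR → ℂ, ∃ L : (Fin mR → ℂ) →L[ℝ] ℝ,
      HasFDerivAt (rateFunθ HAB HRB HAR Fc Fs c) L θ ∧
      ∀ d : Fin mR → ℂ,
        L d = 2 * (∑ i, (starRingEnd ℂ) (rateGradθ HAB HRB HAR Fc Fs c θ i) * d i).re := by
  classical
  have hQpos : ∀ θ : Fin mR → ℂ, (Qθ HAB HRB HAR Fs c θ).PosDef := by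
    intro θ
    rw [Qθ]
    exact Stmt10Aux.posDef_sandwich_cI _ _ hc
  have hEpos : ∀ θ : Fin mR → ℂ, (Eθ HAB HRB HAR Fc Fs c θ).PosDef := by
    intro θ
    rw [Eθ]
    exact Matrix.PosDef.add_posSemidef (hQpos θ) (Stmt10Aux.posSemidef_sandwich _ _)
  refine ⟨fun θ => ⟨hQpos θ, hEpos θ, JacobiAux.posDef_det_im (hQpos θ),
    JacobiAux.posDef_det_re_pos (hQpos θ), JacobiAux.posDef_det_im (hEpos θ),
    JacobiAux.posDef_det_re_pos (hEpos θ)⟩, ?_⟩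
  intro θ
  set Z : Matrix (Fin mB) (Fin mA) ℂ := Zθ HAB HRB HAR θ with hZdef
  set Qm : Matrix (Fin mB) (Fin mB) ℂ := Qθ HAB HRB HAR Fs c θ with hQdef
  set Em : Matrix (Fin mB) (Fin mB) ℂ := Eθ HAB HRB HAR Fc Fs c θ with hEdef
  have hQform : (fun x : Fin mR → ℂ => Qθ HAB HRB HAR Fs c x)
      = fun x : Fin mR → ℂ =>
        (HAB + HRB * Matrix.diagonal x * HAR) * (Fs * Fsᴴ)
          * (HAB + HRB * Matrix.diagonal x * HAR)ᴴ
          + (c : ℂ) • (1 : Matrix (Fin mB) (Fin mB) ℂ) := by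
    funext x
    rw [Qθ, Zθ]
    simp only [Matrix.mul_assoc]
  have hEform : (fun x : Fin mR → ℂ => Eθ HAB HRB HAR Fc Fs c x)
      = fun x : Fin mR → ℂ =>
        (HAB + HRB * Matrix.diagonal x * HAR) * (Fs * Fsᴴ + Fc * Fcᴴ)
          * (HAB + HRB * Matrix.diagonal x * HAR)ᴴ
          + (c : ℂ) • (1 : Matrix (Fin mB) (Fin mB) ℂ) := by
    funext x
    rw [Eθ, Qθ, Zθ]
    simp only [Matrix.mul_add, Matrix.add_mul, Matrix.mul_assoc]
    abel
  obtain ⟨DQ, hDQ, hDQval⟩ := Stmt10Aux.hasFDerivAt_sandwich HAB HRB HAR (Fs * Fsᴴ)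
    ((c : ℂ) • (1 : Matrix (Fin mB) (Fin mB) ℂ)) θ
  obtain ⟨DE, hDE, hDEval⟩ := Stmt10Aux.hasFDerivAt_sandwich HAB HRB HAR (Fs * Fsᴴ + Fc * Fcᴴ)
    ((c : ℂ) • (1 : Matrix (Fin mB) (Fin mB) ℂ)) θ
  have hQD : HasFDerivAt (fun x : Fin mR → ℂ => Qθ HAB HRB HAR Fs c x) DQ θ := by
    rw [hQform]; exact hDQ
  have hED : HasFDerivAt (fun x : Fin mR → ℂ => Eθ HAB HRB HAR Fc Fs c x) DE θ := by
    rw [hEform]; exact hDE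
  have hQlog := JacobiAux.hasFDerivAt_logdet hQD (hQpos θ)
  have hElog := JacobiAux.hasFDerivAt_logdet hED (hEpos θ)
  refine ⟨_, (hElog.1.sub hQlog.1), fun d => ?_⟩
  have hQinvH : Qm⁻¹ᴴ = Qm⁻¹ := ((hQpos θ).inv).1
  have hEinvH : Em⁻¹ᴴ = Em⁻¹ := ((hEpos θ).inv).1
  have hMs : (Fs * Fsᴴ)ᴴ = Fs * Fsᴴ := by
    rw [Matrix.conjTranspose_mul, Matrix.conjTranspose_conjTranspose]
  have hPE : (Fs * Fsᴴ + Fc * Fcᴴ)ᴴ = Fs * Fsᴴ + Fc * Fcᴴ := by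
    rw [Matrix.conjTranspose_add, Matrix.conjTranspose_mul, Matrix.conjTranspose_mul]
    simp [Matrix.conjTranspose_conjTranspose]
  have hval : ∀ d : Fin mR → ℂ,
      ((Em.det.re)⁻¹ • (Complex.reCLM.comp ((JacobiAux.traceAdjCLM Em).comp DE))) d
        - ((Qm.det.re)⁻¹ • (Complex.reCLM.comp ((JacobiAux.traceAdjCLM Qm).comp DQ))) d
      = ((Em⁻¹ * DE d).trace).re - ((Qm⁻¹ * DQ d).trace).re := fun d => by
    rw [hElog.2 d, hQlog.2 d]
  rw [ContinuousLinearMap.sub_apply, hval d, hDEval d, hDQval d]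
  have hZx : HAB + HRB * Matrix.diagonal θ * HAR = Z := rfl
  rw [hZx]
  rw [Stmt10Aux.key_trace Em hEinvH (Fs * Fsᴴ + Fc * Fcᴴ) hPE Z HRB HAR d,
    Stmt10Aux.key_trace Qm hQinvH (Fs * Fsᴴ) hMs Z HRB HAR d]
  -- now the matrix-identity side
  have hGrad : ∀ i, (starRingEnd ℂ) (rateGradθ HAB HRB HAR Fc Fs c θ i)
      = (HAR * (Fs * Fsᴴ + Fc * Fcᴴ) * Zᴴ * Em⁻¹ * HRB
          - HAR * (Fs * Fsᴴ) * Zᴴ * Qm⁻¹ * HRB) i i := by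
    intro i
    have h1 : (starRingEnd ℂ) (rateGradθ HAB HRB HAR Fc Fs c θ i)
        = ((HRBᴴ * (Em⁻¹ * Z * Fc * Fcᴴ
            - (Qm⁻¹ - Em⁻¹) * Z * Fs * Fsᴴ) * HARᴴ)ᴴ) i i := by
      rw [rateGradθ, Matrix.conjTranspose_apply]
      rfl
    rw [h1]
    have h2 : ((HRBᴴ * (Em⁻¹ * Z * Fc * Fcᴴ - (Qm⁻¹ - Em⁻¹) * Z * Fs * Fsᴴ) * HARᴴ)ᴴ)
        = HAR * (Fs * Fsᴴ + Fc * Fcᴴ) * Zᴴ * Em⁻¹ * HRB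
          - HAR * (Fs * Fsᴴ) * Zᴴ * Qm⁻¹ * HRB := by
      simp only [Matrix.conjTranspose_mul, Matrix.conjTranspose_sub,
        Matrix.conjTranspose_conjTranspose, hQinvH, hEinvH, Matrix.mul_sub, Matrix.sub_mul,
        Matrix.mul_add, Matrix.add_mul, Matrix.mul_assoc]
      abel
    rw [h2]
  have hsum : (∑ i, (starRingEnd ℂ) (rateGradθ HAB HRB HAR Fc Fs c θ i) * d i)
      = (∑ i, d i * (HAR * (Fs * Fsᴴ + Fc * Fcᴴ) * Zᴴ * Em⁻¹ * HRB) i i)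
        - (∑ i, d i * (HAR * (Fs * Fsᴴ) * Zᴴ * Qm⁻¹ * HRB) i i) := by
    rw [← Finset.sum_sub_distrib]
    refine Finset.sum_congr rfl fun i _ => ?_
    rw [hGrad i, Matrix.sub_apply]
    ring
  rw [hsum, Complex.sub_re]
  ring

end ThetaGradient
end
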